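/- Let h = (g,1) in the metaplectic cover G̃ of GL(2,F) with g = [[a,b],[c,d]]. Then σ(h) = (τ(g), ⟨det g, c⟩) if c ≠ 0, and σ(h) = (τ(g), 1) if c = 0, where τ(g) = w₀gᵀw₀. In particular p(σ(h)) = τ(p(h)), i.e., σ is a lift of the standard involution τ to G̃. -/

import Mathlib

/-!
Write `g = [[a, b], [c, d]]` and `D = det g`. The matrix part of
`σ(g, 1) = ũ(D) (g, 1)⁻¹ ũ(1)` is `u(D) g⁻¹ u(1) = [[d, b], [c, a]] = τ(g)`. Its `μ_n`-part is a
product of three Kubota cocycles, each a Hilbert symbol of explicit rational expressions in the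
entries. For `c ≠ 0` the product is `⟨-c/D, 1/D⟩ = ⟨c, D⟩⁻¹ = ⟨D, c⟩`; for `c = 0` it is
`⟨-1, d⁻¹⟩⟨d⁻¹, d⁻¹⟩ = ⟨-d⁻¹, d⁻¹⟩ = 1`. Every symbol identity needed reduces, by
bimultiplicativity, to `⟨-b, b⟩ = 1`, a consequence of the Steinberg relation.
-/

open Matrix

variable {F M : Type*}

/-- `X(m) = m₂₁` if nonzero, else `m₂₂`. -/
def Xe [Field F] [DecidableEq F] (m : Matrix (Fin 2) (Fin 2) F) : F :=
  if m 1 0 ≠ 0 then m 1 0 else m 1 1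

/-- The Kubota–Kazhdan–Patterson 2-cocycle on `GL(2,F)` attached to a Hilbert symbol `hs`. -/
def kub [Field F] [DecidableEq F] [CommGroup M] (hs : F → F → M)
    (g₁ g₂ : GL (Fin 2) F) : M :=
  hs (Xe ((g₁ * g₂ : GL (Fin 2) F) : Matrix (Fin 2) (Fin 2) F) /
        Xe (g₁ : Matrix (Fin 2) (Fin 2) F))
     (Xe ((g₁ * g₂ : GL (Fin 2) F) : Matrix (Fin 2) (Fin 2) F) /
        (Xe (g₂ : Matrix (Fin 2) (Fin 2) F) * (g₁ : Matrix (Fin 2) (Fin 2) F).det))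

/-- Multiplication in the metaplectic cover `G̃ = GL(2,F) × μ_n`. -/
def mmul [Field F] [DecidableEq F] [CommGroup M] (hs : F → F → M)
    (h₁ h₂ : GL (Fin 2) F × M) : GL (Fin 2) F × M :=
  (h₁.1 * h₂.1, kub hs h₁.1 h₂.1 * h₁.2 * h₂.2)

/-- Inversion in the metaplectic cover. -/
def minv [Field F] [DecidableEq F] [CommGroup M] (hs : F → F → M)
    (h : GL (Fin 2) F × M) : GL (Fin 2) F × M :=
  (h.1⁻¹, (kub hs h.1 h.1⁻¹)⁻¹ * h.2⁻¹)

/-- `z(λ) = λ I₂` as an element of `GL(2,F)`. -/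
def zGL [Field F] (lam : Fˣ) : GL (Fin 2) F :=
  Units.map (Matrix.scalar (Fin 2)).toMonoidHom lam

/-- `z̃(λ) = (λ I₂, 1)`. -/
def ztil [Field F] [CommGroup M] (lam : Fˣ) : GL (Fin 2) F × M := (zGL lam, 1)

/-- `u(λ) = diag(λ, -λ)` as an element of `GL(2,F)`. -/
def uGL [Field F] (lam : Fˣ) : GL (Fin 2) F :=
  ⟨!![(lam : F), 0; 0, -(lam : F)], !![((lam⁻¹ : Fˣ) : F), 0; 0, -((lam⁻¹ : Fˣ) : F)],
    by simp [Matrix.mul_fin_two, Matrix.one_fin_two],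
    by simp [Matrix.mul_fin_two, Matrix.one_fin_two]⟩

/-- `ũ(λ) = (u(λ), 1)`. -/
def util [Field F] [CommGroup M] (lam : Fˣ) : GL (Fin 2) F × M := (uGL lam, 1)

/-- The determinant of an element of `GL(2,F)`, as a unit of `F`. -/
def detU [Field F] (g : GL (Fin 2) F) : Fˣ := Units.map Matrix.detMonoidHom g

/-- The lift `σ(h) = ũ(det h) h⁻¹ ũ(1)` of the standard involution. -/
def sigmaM [Field F] [DecidableEq F] [CommGroup M] (hs : F → F → M)
    (h : GL (Fin 2) F × M) : GL (Fin 2) F × M :=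
  mmul hs (mmul hs (util (detU h.1)) (minv hs h)) (util 1)


section Symbol

variable [Field F] [CommGroup M] (hs : F → F → M)

def SymbolMulLeft : Prop :=
  ∀ a b c : F, a ≠ 0 → b ≠ 0 → c ≠ 0 → hs (a * b) c = hs a c * hs b c

def SymbolMulRight : Prop :=
  ∀ a b c : F, a ≠ 0 → b ≠ 0 → c ≠ 0 → hs a (b * c) = hs a b * hs a c

def SymbolSteinberg : Prop :=
  ∀ a : F, a ≠ 0 → 1 - a ≠ 0 → hs a (1 - a) = 1

variable {hs}

lemma SymbolMulLeft.one_left (h : SymbolMulLeft hs) {b : F} (hb : b ≠ 0) : hs 1 b = 1 := by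
  simpa using h 1 1 b one_ne_zero one_ne_zero hb

lemma SymbolMulRight.one_right (h : SymbolMulRight hs) {a : F} (ha : a ≠ 0) : hs a 1 = 1 := by
  simpa using h a 1 1 ha one_ne_zero one_ne_zero

lemma SymbolMulLeft.inv_left (h : SymbolMulLeft hs) {a b : F} (ha : a ≠ 0) (hb : b ≠ 0) :
    hs a⁻¹ b = (hs a b)⁻¹ := by
  refine eq_inv_of_mul_eq_one_left ?_
  rw [← h _ _ _ (inv_ne_zero ha) ha hb, inv_mul_cancel₀ ha, h.one_left hb]

lemma SymbolMulRight.inv_right (h : SymbolMulRight hs) {a b : F} (ha : a ≠ 0) (hb : b ≠ 0) :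
    hs a b⁻¹ = (hs a b)⁻¹ := by
  refine eq_inv_of_mul_eq_one_left ?_
  rw [← h _ _ _ ha (inv_ne_zero hb) hb, inv_mul_cancel₀ hb, h.one_right ha]

lemma symbol_neg_left_self (hL : SymbolMulLeft hs) (hR : SymbolMulRight hs)
    (hS : SymbolSteinberg hs) {b : F} (hb : b ≠ 0) : hs (-b) b = 1 := by
  rcases eq_or_ne b 1 with rfl | hb1
  · exact hR.one_right (neg_ne_zero.2 one_ne_zero)
  have h₁ : (1 : F) - b ≠ 0 := sub_ne_zero.2 hb1.symm
  have h₂ : (1 : F) - b⁻¹ ≠ 0 := sub_ne_zero.2 (Ne.symm (inv_ne_one.2 hb1))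
  -- `-b = (1 - b) / (1 - b⁻¹)`, and both factors pair trivially with `b` by Steinberg
  have key : -b = (1 - b) * (1 - b⁻¹)⁻¹ := by field_simp; ring
  rw [key, hL _ _ _ h₁ (inv_ne_zero h₂) hb, hL.inv_left h₂ hb, ← hR.inv_right h₂ hb]
  have s₁ := hS (1 - b) h₁ (by rwa [sub_sub_cancel])
  have s₂ := hS (1 - b⁻¹) h₂ (by rw [sub_sub_cancel]; exact inv_ne_zero hb)
  rw [sub_sub_cancel] at s₁ s₂
  rw [s₁, s₂, mul_one]

lemma symbol_self_neg (hL : SymbolMulLeft hs) (hR : SymbolMulRight hs)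
    (hS : SymbolSteinberg hs) {a : F} (ha : a ≠ 0) : hs a (-a) = 1 := by
  simpa using symbol_neg_left_self hL hR hS (neg_ne_zero.2 ha)

lemma symbol_neg_mul_left (hL : SymbolMulLeft hs) (hR : SymbolMulRight hs)
    (hS : SymbolSteinberg hs) {a b : F} (ha : a ≠ 0) (hb : b ≠ 0) :
    hs (-(a * b)) b = hs a b := by
  rw [← mul_neg, hL _ _ _ ha (neg_ne_zero.2 hb) hb, symbol_neg_left_self hL hR hS hb, mul_one]

end Symbol

section Matrices

lemma antidiag_mul_transpose_mul_antidiag {R : Type*} [Semiring R]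
    (A : Matrix (Fin 2) (Fin 2) R) :
    !![(0 : R), 1; 1, 0] * Aᵀ * !![(0 : R), 1; 1, 0] = !![A 1 1, A 0 1; A 1 0, A 0 0] := by
  ext i j
  fin_cases i <;> fin_cases j <;> simp [mul_apply, Fin.sum_univ_two, vecMul, dotProduct]

variable [Field F] (g : GL (Fin 2) F)

lemma coe_GL_fin_two_inv :
    ((g⁻¹ : GL (Fin 2) F) : Matrix (Fin 2) (Fin 2) F) =
      g.val.det⁻¹ • !![g 1 1, -g 0 1; -g 1 0, g 0 0] := by
  rw [coe_units_inv, inv_def, Ring.inverse_eq_inv', adjugate_fin_two]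

lemma coe_uGL_det_mul_inv :
    ((uGL (detU g) * g⁻¹ : GL (Fin 2) F) : Matrix (Fin 2) (Fin 2) F) =
      !![g 1 1, -g 0 1; g 1 0, -g 0 0] := by
  have hD := g.det_ne_zero
  rw [Units.val_mul, coe_GL_fin_two_inv]
  ext i j
  fin_cases i <;> fin_cases j <;> simp [uGL, detU, mul_apply, Fin.sum_univ_two] <;> field_simp

lemma coe_uGL_det_mul_inv_mul_uGL_one :
    ((uGL (detU g) * g⁻¹ * uGL 1 : GL (Fin 2) F) : Matrix (Fin 2) (Fin 2) F) =
      !![g 1 1, g 0 1; g 1 0, g 0 0] := by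
  rw [Units.val_mul, coe_uGL_det_mul_inv]
  ext i j
  fin_cases i <;> fin_cases j <;> simp [uGL]

lemma det_coe_uGL (t : Fˣ) : (uGL t : Matrix (Fin 2) (Fin 2) F).det = -(t * t) := by
  simp [uGL, det_fin_two_of]

lemma det_coe_uGL_det_mul_inv :
    ((uGL (detU g) * g⁻¹ : GL (Fin 2) F) : Matrix (Fin 2) (Fin 2) F).det = -g.val.det := by
  simp [det_coe_uGL, detU]

end Matrices

section Cocycle

variable [Field F] [DecidableEq F] [CommGroup M] (hs : F → F → M)

lemma Xe_one : Xe (1 : Matrix (Fin 2) (Fin 2) F) = 1 := by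
  simp [Xe]

lemma Xe_coe_uGL (t : Fˣ) : Xe (uGL t : Matrix (Fin 2) (Fin 2) F) = -t := by
  simp [Xe, uGL]

lemma kub_self_inv (g : GL (Fin 2) F) :
    kub hs g g⁻¹ = hs (Xe g.val)⁻¹ (Xe (g⁻¹).val * g.val.det)⁻¹ := by
  simp only [kub, mul_inv_cancel, Units.val_one, Xe_one, one_div]

lemma sigmaM_mk_one (g : GL (Fin 2) F) :
    sigmaM hs (g, 1) =
      (uGL (detU g) * g⁻¹ * uGL 1,
        kub hs (uGL (detU g) * g⁻¹) (uGL 1) * kub hs (uGL (detU g)) g⁻¹ * (kub hs g g⁻¹)⁻¹) := by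
  simp only [sigmaM, mmul, minv, util, inv_one, mul_one, mul_assoc]

variable {hs}

lemma sigmaM_mk_one_snd_of_ne_zero (hL : SymbolMulLeft hs) (hR : SymbolMulRight hs)
    (hS : SymbolSteinberg hs) {g : GL (Fin 2) F} (hc : g 1 0 ≠ 0) :
    (sigmaM hs (g, 1)).2 = (hs (g 1 0) g.val.det)⁻¹ := by
  have hD := g.det_ne_zero
  have hτ : kub hs (uGL (detU g) * g⁻¹) (uGL 1) = 1 := by
    rw [kub, det_coe_uGL_det_mul_inv, coe_uGL_det_mul_inv_mul_uGL_one, coe_uGL_det_mul_inv,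
      Xe_coe_uGL]
    simp [Xe, hc]
    exact hL.one_left (div_ne_zero hc hD)
  have hu : kub hs (uGL (detU g)) g⁻¹ = hs (-(g 1 0 * g.val.det⁻¹)) g.val.det⁻¹ := by
    rw [kub, coe_uGL_det_mul_inv, coe_GL_fin_two_inv, Xe_coe_uGL, det_coe_uGL]
    congr 1 <;> simp [Xe, hc, hD, detU] <;> field_simp
  have hg : kub hs g g⁻¹ = hs (g 1 0)⁻¹ (-(g 1 0)⁻¹) := by
    rw [kub_self_inv, coe_GL_fin_two_inv]
    congr 1 <;> simp [Xe, hc, hD]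
    field_simp
  rw [sigmaM_mk_one, hτ, hu, hg, symbol_self_neg hL hR hS (inv_ne_zero hc),
    symbol_neg_mul_left hL hR hS hc (inv_ne_zero hD), hR.inv_right hc hD]
  simp

lemma sigmaM_mk_one_snd_of_eq_zero (hL : SymbolMulLeft hs) (hR : SymbolMulRight hs)
    (hS : SymbolSteinberg hs) {g : GL (Fin 2) F} (hc : g 1 0 = 0) :
    (sigmaM hs (g, 1)).2 = 1 := by
  have hD := g.det_ne_zero
  have hDad : g.val.det = g 0 0 * g 1 1 := by rw [det_fin_two, hc]; ring
  have ha : g 0 0 ≠ 0 := left_ne_zero_of_mul (hDad ▸ hD)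
  have hd : g 1 1 ≠ 0 := right_ne_zero_of_mul (hDad ▸ hD)
  have hτ : kub hs (uGL (detU g) * g⁻¹) (uGL 1) = hs (-1) (g 1 1)⁻¹ := by
    rw [kub, det_coe_uGL_det_mul_inv, coe_uGL_det_mul_inv_mul_uGL_one, coe_uGL_det_mul_inv,
      Xe_coe_uGL]
    congr 1 <;> simp [Xe, hc, hDad] <;> field_simp
  have hu : kub hs (uGL (detU g)) g⁻¹ = hs (g 1 1)⁻¹ ((g 0 0)⁻¹ * (g 1 1)⁻¹) := by
    rw [kub, coe_uGL_det_mul_inv, coe_GL_fin_two_inv, Xe_coe_uGL, det_coe_uGL]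
    congr 1 <;> simp [Xe, hc, hDad, detU] <;> field_simp
  have hg : kub hs g g⁻¹ = hs (g 1 1)⁻¹ (g 0 0)⁻¹ := by
    rw [kub_self_inv, coe_GL_fin_two_inv]
    congr 1 <;> simp [Xe, hc, hDad]
    field_simp
  have he := inv_ne_zero hd
  have hneg : hs (-1) (g 1 1)⁻¹ * hs (g 1 1)⁻¹ (g 1 1)⁻¹ = 1 := by
    rw [← hL _ _ _ (neg_ne_zero.2 one_ne_zero) he he, neg_one_mul,
      symbol_neg_left_self hL hR hS he]
  rw [sigmaM_mk_one, hτ, hu, hg, hR _ _ _ he (inv_ne_zero ha) he,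
    mul_comm (hs (g 1 1)⁻¹ (g 0 0)⁻¹), ← mul_assoc, hneg, one_mul, mul_inv_cancel]

end Cocycle

/-- For `h = (g,1)` with `g = [[a,b],[c,d]]`, one has
`σ(h) = (τ(g), ⟨det g, c⟩)` if `c ≠ 0` and `σ(h) = (τ(g), 1)` if `c = 0`, where
`τ(g) = w₀ gᵀ w₀`. In particular `σ` is a lift of the standard involution `τ`. -/
theorem sigma_lifts_tau [Field F] [DecidableEq F] [CommGroup M] (hs : F → F → M)
    (hmul_left : ∀ a b c : F, a ≠ 0 → b ≠ 0 → c ≠ 0 → hs (a * b) c = hs a c * hs b c)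
    (hmul_right : ∀ a b c : F, a ≠ 0 → b ≠ 0 → c ≠ 0 → hs a (b * c) = hs a b * hs a c)
    (hantisym : ∀ a b : F, a ≠ 0 → b ≠ 0 → hs a b * hs b a = 1)
    (hsteinberg : ∀ a : F, a ≠ 0 → 1 - a ≠ 0 → hs a (1 - a) = 1)
    (g : GL (Fin 2) F) :
    ((sigmaM hs ((g, 1) : GL (Fin 2) F × M)).1 : Matrix (Fin 2) (Fin 2) F) =
      !![(0 : F), 1; 1, 0] * (g : Matrix (Fin 2) (Fin 2) F)ᵀ * !![(0 : F), 1; 1, 0] ∧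
    (sigmaM hs ((g, 1) : GL (Fin 2) F × M)).2 =
      (if (g : Matrix (Fin 2) (Fin 2) F) 1 0 ≠ 0 then
        hs (g : Matrix (Fin 2) (Fin 2) F).det ((g : Matrix (Fin 2) (Fin 2) F) 1 0)
      else 1) := by
  refine ⟨?_, ?_⟩
  · rw [antidiag_mul_transpose_mul_antidiag, sigmaM_mk_one]
    exact coe_uGL_det_mul_inv_mul_uGL_one g
  · split_ifs with hc
    · rw [sigmaM_mk_one_snd_of_ne_zero hmul_left hmul_right hsteinberg hc]
      exact inv_eq_of_mul_eq_one_right (hantisym _ _ hc g.det_ne_zero)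
    · exact sigmaM_mk_one_snd_of_eq_zero hmul_left hmul_right hsteinberg (not_not.1 hc)
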